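/- Let (P, Ω) be a poset with an ℝ-flow, let ε ≥ 0, and let I, J ⊆ P be 2ε-significant intervals such that all pairwise intersections among shifts of I and J occurring below are intervals (e.g. I, J belong to an intersection-closed family of intervals closed under the action of Ω). Then C(I) and C(J) are ε-interleaved if and only if the following four conditions hold: (1) there exists a nonzero morphism C(I) → C(J(ε)); (2) there exists a nonzero morphism C(J) → C(I(ε)); (3) I ∩ I(2ε) is nonempty and I ∩ I(2ε) ⊆ J(ε); (4) J ∩ J(2ε) is nonempty and J ∩ J(2ε) ⊆ I(ε). -/

import Mathlib

open CategoryTheory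
open scoped Classical ENNReal NNReal

set_option linter.unusedSectionVars false
set_option linter.unusedVariables false

/-! ## Posets, intervals, flows -/

variable {P : Type} [PartialOrder P]

/-- A subset of a poset is poset-convex if it contains every point between two of its points. -/
def PosetConvex (I : Set P) : Prop :=
  ∀ ⦃p q r : P⦄, p ∈ I → q ∈ I → p ≤ r → r ≤ q → r ∈ I

/-- A subset of a poset is poset-connected if any two of its points are joined by a
zigzag path inside the subset. -/
def PosetConnected (I : Set P) : Prop :=
  ∀ p ∈ I, ∀ q ∈ I,
    Relation.ReflTransGen (fun a b => b ∈ I ∧ (a ≤ b ∨ b ≤ a)) p q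

/-- An interval in a poset is a poset-convex and poset-connected subset. -/
def IsInterval (I : Set P) : Prop := PosetConvex I ∧ PosetConnected I

/-- `Q` is a poset-connected component of `U`: a poset-connected subset of `U`, maximal with
respect to inclusion among poset-connected subsets of `U`. -/
def IsPosetComponent (U Q : Set P) : Prop :=
  Q ⊆ U ∧ PosetConnected Q ∧
    ∀ Q' : Set P, Q' ⊆ U → PosetConnected Q' → Q ⊆ Q' → Q' = Q

/-- A subset `Q` of `I ∩ J` is `(I,J)`-valid. -/
def IsValid (I J Q : Set P) : Prop :=
  ∀ p ∈ Q, (∀ q ∈ I, q ≤ p → q ∈ J) ∧ (∀ r ∈ J, p ≤ r → r ∈ I)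

/-- An `ℝ`-flow on a poset. -/
structure RFlow (P : Type) [PartialOrder P] where
  Ω : ℝ → P → P
  mono : ∀ t : ℝ, Monotone (Ω t)
  mono_param : ∀ {t s : ℝ}, t ≤ s → ∀ p : P, Ω t p ≤ Ω s p
  add : ∀ t s : ℝ, ∀ p : P, Ω (t + s) p = Ω t (Ω s p)
  zero : ∀ p : P, Ω 0 p = p

/-- The `t`-shift `I(t)` of a subset of a poset with an `ℝ`-flow. -/
def RFlow.shiftSet (Φ : RFlow P) (I : Set P) (t : ℝ) : Set P := {p : P | Φ.Ω t p ∈ I}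

lemma RFlow.self_le (Φ : RFlow P) {t : ℝ} (ht : 0 ≤ t) (p : P) : p ≤ Φ.Ω t p := by
  have h := Φ.mono_param ht p
  rwa [Φ.zero] at h

lemma RFlow.self_le_twice (Φ : RFlow P) {t : ℝ} (ht : 0 ≤ t) (p : P) :
    p ≤ Φ.Ω t (Φ.Ω t p) :=
  (Φ.self_le ht p).trans (Φ.self_le ht _)

lemma RFlow.omega_neg_omega (Φ : RFlow P) (t : ℝ) (p : P) : Φ.Ω (-t) (Φ.Ω t p) = p := by
  have h := Φ.add (-t) t p
  rw [neg_add_cancel, Φ.zero] at h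
  exact h.symm

lemma RFlow.omega_omega_neg (Φ : RFlow P) (t : ℝ) (p : P) : Φ.Ω t (Φ.Ω (-t) p) = p := by
  have h := Φ.add t (-t) p
  rw [add_neg_cancel, Φ.zero] at h
  exact h.symm

lemma RFlow.posetConvex_shiftSet (Φ : RFlow P) {I : Set P} (hI : PosetConvex I) (t : ℝ) :
    PosetConvex (Φ.shiftSet I t) := by
  intro p q r hp hq hpr hrq
  exact hI hp hq (Φ.mono t hpr) (Φ.mono t hrq)

lemma RFlow.posetConnected_shiftSet (Φ : RFlow P) {I : Set P} (hI : PosetConnected I) (t : ℝ) :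
    PosetConnected (Φ.shiftSet I t) := by
  intro p hp q hq
  have h := hI _ hp _ hq
  have h2 := Relation.ReflTransGen.lift
    (p := fun a b : P => b ∈ Φ.shiftSet I t ∧ (a ≤ b ∨ b ≤ a)) (fun x : P => Φ.Ω (-t) x)
    (fun a b hab => ⟨show Φ.Ω t (Φ.Ω (-t) b) ∈ I by rw [Φ.omega_omega_neg]; exact hab.1,
      hab.2.imp (fun h' => Φ.mono (-t) h') (fun h' => Φ.mono (-t) h')⟩) _ _ h
  simpa only [Function.onFun, Φ.omega_neg_omega] using h2

lemma RFlow.isInterval_shiftSet (Φ : RFlow P) {I : Set P} (hI : IsInterval I) (t : ℝ) :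
    IsInterval (Φ.shiftSet I t) :=
  ⟨Φ.posetConvex_shiftSet hI.1 t, Φ.posetConnected_shiftSet hI.2 t⟩

lemma RFlow.shiftSet_nonempty (Φ : RFlow P) {I : Set P} (hI : I.Nonempty) (t : ℝ) :
    (Φ.shiftSet I t).Nonempty := by
  obtain ⟨x, hx⟩ := hI
  exact ⟨Φ.Ω (-t) x, show Φ.Ω t (Φ.Ω (-t) x) ∈ I by rw [Φ.omega_omega_neg]; exact hx⟩

/-! ## Characteristic (interval) persistence modules -/

variable (K : Type) [Field K]

/-- The pointwise value of the characteristic module of `I`, as a submodule of `K`. -/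
noncomputable def charSub (I : Set P) (p : P) : Submodule K K :=
  if p ∈ I then ⊤ else ⊥

lemma charSub_eq_top {I : Set P} {p : P} (hp : p ∈ I) : charSub K I p = ⊤ := if_pos hp

lemma charSub_eq_bot {I : Set P} {p : P} (hp : p ∉ I) : charSub K I p = ⊥ := if_neg hp

lemma charElt_eq_zero {I : Set P} {p : P} (hp : p ∉ I) (x : ↥(charSub K I p)) : x = 0 := by
  exact Subtype.ext ((Submodule.eq_bot_iff _).mp (charSub_eq_bot K hp) (x : K) x.2)

/-- The structure maps of the characteristic module of `I`. -/
noncomputable def charMap (I : Set P) (p q : P) :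
    ↥(charSub K I p) →ₗ[K] ↥(charSub K I q) :=
  if h : p ∈ I ∧ q ∈ I then
    { toFun := fun x => ⟨(x : K), by rw [charSub_eq_top K h.2]; exact Submodule.mem_top⟩
      map_add' := fun x y => rfl
      map_smul' := fun c x => rfl }
  else 0

lemma charMap_id (I : Set P) (p : P) : charMap K I p p = LinearMap.id := by
  by_cases hp : p ∈ I
  · simp only [charMap, dif_pos (And.intro hp hp)]
    rfl
  · ext x
    rw [charElt_eq_zero K hp x]
    simp

lemma charMap_comp {I : Set P} (hI : PosetConvex I) {p q r : P} (hpq : p ≤ q) (hqr : q ≤ r) :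
    (charMap K I q r).comp (charMap K I p q) = charMap K I p r := by
  by_cases hp : p ∈ I
  · by_cases hr : r ∈ I
    · have hq : q ∈ I := hI hp hr hpq hqr
      ext x
      simp only [charMap, dif_pos (And.intro hp hq), dif_pos (And.intro hq hr),
        dif_pos (And.intro hp hr), LinearMap.comp_apply, LinearMap.coe_mk, AddHom.coe_mk]
    · ext x
      exact congrArg Subtype.val
        ((charElt_eq_zero K hr ((charMap K I q r).comp (charMap K I p q) x)).trans
          (charElt_eq_zero K hr (charMap K I p r x)).symm)
  · ext x
    rw [charElt_eq_zero K hp x]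
    simp

/-- The characteristic persistence module `C(I)` of a poset-convex subset `I`. -/
noncomputable def charMod (I : Set P) (hI : PosetConvex I) : P ⥤ ModuleCat K where
  obj p := ModuleCat.of K ↥(charSub K I p)
  map {p q} h := ModuleCat.ofHom (charMap K I p q)
  map_id p := ModuleCat.hom_ext (charMap_id K I p)
  map_comp {p q r} h1 h2 := ModuleCat.hom_ext (charMap_comp K hI (leOfHom h1) (leOfHom h2)).symm

/-- The zero persistence module, realized as the characteristic module of the empty interval. -/
noncomputable def zeroPMod : P ⥤ ModuleCat K :=
  charMod K (∅ : Set P) (fun _ _ _ hp _ _ _ => absurd hp (Set.notMem_empty _))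

/-! ## Barcodes and interval-decomposable modules -/

/-- A barcode over a poset: a multiset of nonempty intervals, encoded as an indexed family. -/
structure Barcode (P : Type) [PartialOrder P] where
  ι : Type
  B : ι → Set P
  interval : ∀ a : ι, IsInterval (B a)
  nonempty : ∀ a : ι, (B a).Nonempty

/-- The interval-decomposable module `⊕_{a} C(B a)` associated to a barcode. -/
noncomputable def bcMod (D : Barcode P) : P ⥤ ModuleCat K where
  obj p := ModuleCat.of K (Π₀ a : D.ι, ↥(charSub K (D.B a) p))
  map {p q} h := ModuleCat.ofHom (DFinsupp.mapRange.linearMap (fun a => charMap K (D.B a) p q))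
  map_id p := by
    have h : (fun a : D.ι => charMap K (D.B a) p p)
        = fun a : D.ι => (LinearMap.id : ↥(charSub K (D.B a) p) →ₗ[K] ↥(charSub K (D.B a) p)) := by
      funext a; exact charMap_id K (D.B a) p
    show ModuleCat.ofHom (DFinsupp.mapRange.linearMap (fun a => charMap K (D.B a) p p)) = ModuleCat.ofHom LinearMap.id
    rw [h, DFinsupp.mapRange.linearMap_id]
  map_comp {p q r} h1 h2 := by
    have h : (fun a : D.ι => charMap K (D.B a) p r)
        = fun a : D.ι => (charMap K (D.B a) q r).comp (charMap K (D.B a) p q) := by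
      funext a
      exact (charMap_comp K (D.interval a).1 (leOfHom h1) (leOfHom h2)).symm
    show ModuleCat.ofHom (DFinsupp.mapRange.linearMap (fun a => charMap K (D.B a) p r)) = _
    rw [h, DFinsupp.mapRange.linearMap_comp]
    rfl

/-- `M` is interval-decomposable with barcode `D`. -/
def IsDecompositionOf (D : Barcode P) (M : P ⥤ ModuleCat K) : Prop :=
  Nonempty (M ≅ bcMod K D)

/-- The shift of a barcode along a flow. -/
noncomputable def Barcode.shift (D : Barcode P) (Φ : RFlow P) (t : ℝ) : Barcode P where
  ι := D.ι
  B a := Φ.shiftSet (D.B a) t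
  interval a := Φ.isInterval_shiftSet (D.interval a) t
  nonempty a := Φ.shiftSet_nonempty (D.nonempty a) t

/-! ## Shifts of modules, interleavings, distances -/

/-- The shift `M(t)` of a persistence module along a flow. -/
noncomputable def Pshift (Φ : RFlow P) (t : ℝ) (M : P ⥤ ModuleCat K) : P ⥤ ModuleCat K :=
  (Φ.mono t).functor ⋙ M

/-- The ordered pair `(M, N)` is left `ε`-interleaved. -/
noncomputable def LeftInterleaved (Φ : RFlow P) {ε : ℝ} (hε : 0 ≤ ε)
    (M N : P ⥤ ModuleCat K) : Prop :=
  ∃ (f : M ⟶ Pshift K Φ ε N) (g : N ⟶ Pshift K Φ ε M),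
    ∀ p : P, f.app p ≫ g.app (Φ.Ω ε p) = M.map (homOfLE (Φ.self_le_twice hε p))

/-- `M` and `N` are `ε`-interleaved. -/
noncomputable def Interleaved (Φ : RFlow P) {ε : ℝ} (hε : 0 ≤ ε)
    (M N : P ⥤ ModuleCat K) : Prop :=
  ∃ (f : M ⟶ Pshift K Φ ε N) (g : N ⟶ Pshift K Φ ε M),
    (∀ p : P, f.app p ≫ g.app (Φ.Ω ε p) = M.map (homOfLE (Φ.self_le_twice hε p))) ∧
    (∀ p : P, g.app p ≫ f.app (Φ.Ω ε p) = N.map (homOfLE (Φ.self_le_twice hε p)))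

/-- The interleaving distance between two persistence modules. -/
noncomputable def dI (Φ : RFlow P) (M N : P ⥤ ModuleCat K) : ℝ≥0∞ :=
  ⨅ (ε : NNReal) (_ : Interleaved K Φ ε.coe_nonneg M N), (ε : ℝ≥0∞)

/-- An interval `I` is `t`-trivial if the transition morphism `C(I) → C(I(t))` vanishes. -/
noncomputable def IsTrivialIv (Φ : RFlow P) {t : ℝ} (ht : 0 ≤ t)
    (I : Set P) (hI : PosetConvex I) : Prop :=
  ∀ p : P, (charMod K I hI).map (homOfLE (Φ.self_le ht p)) = 0

/-- An `ε`-correspondence between two barcodes. -/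
noncomputable def IsCorrespondence (Φ : RFlow P) {ε : ℝ} (hε : 0 ≤ ε)
    (DM DN : Barcode P) (σ : Set (DM.ι × DN.ι)) : Prop :=
  (∀ ab ∈ σ, Interleaved K Φ hε
      (charMod K (DM.B ab.1) (DM.interval ab.1).1) (charMod K (DN.B ab.2) (DN.interval ab.2).1)) ∧
  (∀ a : DM.ι, (∀ b : DN.ι, (a, b) ∉ σ) →
      Interleaved K Φ hε (charMod K (DM.B a) (DM.interval a).1) (zeroPMod K)) ∧
  (∀ b : DN.ι, (∀ a : DM.ι, (a, b) ∉ σ) →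
      Interleaved K Φ hε (zeroPMod K) (charMod K (DN.B b) (DN.interval b).1))

/-- An `ε`-matching between two barcodes. -/
noncomputable def IsMatching (Φ : RFlow P) {ε : ℝ} (hε : 0 ≤ ε)
    (DM DN : Barcode P) (σ : Set (DM.ι × DN.ι)) : Prop :=
  IsCorrespondence K Φ hε DM DN σ ∧
  (∀ a b b', (a, b) ∈ σ → (a, b') ∈ σ → b = b') ∧
  (∀ a a' b, (a, b) ∈ σ → (a', b) ∈ σ → a = a')

/-- The Hausdorff distance between (modules with) barcodes `DM`, `DN`. -/
noncomputable def dH (Φ : RFlow P) (DM DN : Barcode P) : ℝ≥0∞ :=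
  ⨅ (ε : NNReal) (_ : ∃ σ : Set (DM.ι × DN.ι), IsCorrespondence K Φ ε.coe_nonneg DM DN σ),
    (ε : ℝ≥0∞)

/-- The bottleneck distance between (modules with) barcodes `DM`, `DN`. -/
noncomputable def dB (Φ : RFlow P) (DM DN : Barcode P) : ℝ≥0∞ :=
  ⨅ (ε : NNReal) (_ : ∃ σ : Set (DM.ι × DN.ι), IsMatching K Φ ε.coe_nonneg DM DN σ),
    (ε : ℝ≥0∞)

/-! Every morphism `C(A) ⟶ C(B)` is pointwise multiplication by a scalar, and naturality makes
this scalar constant along comparable points of `A ∩ B`. When `A ∩ B` is poset-connected (here: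
it lies in the family `F`), a nonzero morphism is thus a nonzero constant on `A ∩ B`, and
naturality at the boundary of `A ∩ B` then says that `A ∩ B` is `(A, B)`-valid; validity is in
turn exactly what makes the identity of `K` on `A ∩ B` a morphism `C(A) ⟶ C(B)`.

So conditions (1) and (2) provide canonical morphisms `C(I) ⟶ C(J(ε))` and `C(J) ⟶ C(I(ε))`.
Their composite at `p` is the identity iff `p ∈ I`, `Ω_ε p ∈ J` and `Ω_2ε p ∈ I`, while the
transition morphism is the identity iff `p ∈ I ∩ I(2ε)`; condition (3) says these agree.
Conversely, an interleaving factors the transition morphism at `p ∈ I ∩ I(2ε)`, which is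
nonzero, through `C(J)` at `Ω_ε p`; this forces `Ω_ε p ∈ J`, and `2ε`-significance makes
`I ∩ I(2ε)` nonempty, so that the interleaving morphisms are nonzero. -/

lemma RFlow.Ω_two_mul (Φ : RFlow P) (t : ℝ) (p : P) : Φ.Ω (2 * t) p = Φ.Ω t (Φ.Ω t p) := by
  rw [two_mul, Φ.add]

lemma RFlow.shiftSet_eq_image (Φ : RFlow P) (S : Set P) (t : ℝ) :
    Φ.shiftSet S t = Φ.Ω (-t) '' S := by
  ext p
  refine ⟨fun hp => ⟨Φ.Ω t p, hp, Φ.omega_neg_omega t p⟩, ?_⟩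
  rintro ⟨q, hq, rfl⟩
  show Φ.Ω t (Φ.Ω (-t) q) ∈ S
  rwa [Φ.omega_omega_neg]

lemma coe_charSub_eq_zero {I : Set P} {p : P} (hp : p ∉ I) (x : ↥(charSub K I p)) :
    (x : K) = 0 :=
  congrArg Subtype.val (charElt_eq_zero K hp x)

lemma charMap_apply_coe {I : Set P} {p q : P} (x : ↥(charSub K I p)) :
    (charMap K I p q x : K) = if q ∈ I then (x : K) else 0 := by
  by_cases hq : q ∈ I
  · by_cases hp : p ∈ I
    · simp only [charMap, dif_pos (And.intro hp hq), if_pos hq]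
      rfl
    · rw [charElt_eq_zero K hp x, map_zero]
      simp
  · rw [if_neg hq, coe_charSub_eq_zero K hq]

noncomputable def charOne {I : Set P} {p : P} (hp : p ∈ I) : ↥(charSub K I p) :=
  ⟨1, by rw [charSub_eq_top K hp]; trivial⟩

lemma isZero_charMod_obj {I : Set P} (hI : PosetConvex I) {p : P} (hp : p ∉ I) :
    Limits.IsZero ((charMod K I hI).obj p) :=
  have : Subsingleton ↥(charSub K I p) := by
    rw [charSub_eq_bot K hp]
    infer_instance
  ModuleCat.isZero_of_subsingleton (ModuleCat.of K ↥(charSub K I p))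

lemma charMod_map_ne_zero {I : Set P} (hI : PosetConvex I) {p q : P} (hp : p ∈ I) (hq : q ∈ I)
    (h : p ⟶ q) : (charMod K I hI).map h ≠ 0 := by
  intro h0
  have h1 : ((charMod K I hI).map h).hom (charOne K hp) = 0 := by
    rw [h0]
    rfl
  have h2 : (charMap K I p q (charOne K hp) : K) = 0 := congrArg Subtype.val h1
  rw [charMap_apply_coe, if_pos hq] at h2
  exact one_ne_zero h2

lemma mem_of_charMod_map_ne_zero {I : Set P} (hI : PosetConvex I) {p q : P} {h : p ⟶ q}
    (hne : (charMod K I hI).map h ≠ 0) : p ∈ I ∧ q ∈ I := by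
  by_contra hpq
  rcases not_and_or.mp hpq with hp | hq
  · exact hne ((isZero_charMod_obj K hI hp).eq_of_src _ _)
  · exact hne ((isZero_charMod_obj K hI hq).eq_of_tgt _ _)

lemma PosetConnected.apply_eq {α : Type*} {S : Set P} (hS : PosetConnected S) {c : P → α}
    (hc : ∀ a ∈ S, ∀ b ∈ S, a ≤ b → c a = c b) {p q : P} (hp : p ∈ S) (hq : q ∈ S) :
    c p = c q := by
  suffices h : c p = c q ∧ q ∈ S from h.1
  have path := hS p hp q hq
  clear hq
  induction path with
  | refl => exact ⟨rfl, hp⟩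
  | tail _ hbd ih =>
    obtain ⟨hpb, hb⟩ := ih
    refine ⟨hpb.trans ?_, hbd.1⟩
    rcases hbd.2 with hle | hle
    · exact hc _ hb _ hbd.1 hle
    · exact (hc _ hbd.1 _ hb hle).symm

section HomCoeff

variable {A B : Set P} {hA : PosetConvex A} {hB : PosetConvex B}

/-- The components of a morphism `C(A) ⟶ C(B)`, retyped as maps between submodules of `K`. -/
noncomputable def homApp (f : charMod K A hA ⟶ charMod K B hB) (p : P) :
    ↥(charSub K A p) →ₗ[K] ↥(charSub K B p) :=
  (f.app p).hom

lemma homApp_naturality (f : charMod K A hA ⟶ charMod K B hB) {p q : P} (hpq : p ≤ q) :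
    homApp K f q ∘ₗ charMap K A p q = charMap K B p q ∘ₗ homApp K f p :=
  congrArg ModuleCat.Hom.hom (f.naturality (homOfLE hpq))

noncomputable def homCoeff (f : charMod K A hA ⟶ charMod K B hB) (p : P) : K :=
  if hp : p ∈ A then (homApp K f p (charOne K hp) : K) else 0

lemma homApp_apply_coe (f : charMod K A hA ⟶ charMod K B hB) {p : P}
    (x : ↥(charSub K A p)) : (homApp K f p x : K) = homCoeff K f p * x := by
  by_cases hp : p ∈ A
  · have hx : x = (x : K) • charOne K hp := Subtype.ext (by simp [charOne])
    rw [homCoeff, dif_pos hp, hx, map_smul, Submodule.coe_smul, smul_eq_mul, mul_comm]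
    simp [charOne]
  · rw [charElt_eq_zero K hp x, map_zero]
    simp

lemma homCoeff_eq_zero_of_not_mem (f : charMod K A hA ⟶ charMod K B hB) {p : P} (hp : p ∉ B) :
    homCoeff K f p = 0 := by
  unfold homCoeff
  split_ifs
  · exact coe_charSub_eq_zero K hp _
  · rfl

lemma mem_inter_of_homCoeff_ne_zero (f : charMod K A hA ⟶ charMod K B hB) {p : P}
    (h : homCoeff K f p ≠ 0) : p ∈ A ∩ B := by
  refine ⟨by_contra fun hp => h (dif_neg hp), by_contra fun hp => h ?_⟩
  exact homCoeff_eq_zero_of_not_mem K f hp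

lemma homCoeff_naturality (f : charMod K A hA ⟶ charMod K B hB) {p q : P} (hpq : p ≤ q)
    (hp : p ∈ A) :
    (if q ∈ A then homCoeff K f q else 0) = if q ∈ B then homCoeff K f p else 0 := by
  have h := congrArg (fun φ => (φ (charOne K hp) : K)) (homApp_naturality K f hpq)
  simp only [LinearMap.comp_apply] at h
  rw [homApp_apply_coe, charMap_apply_coe, charMap_apply_coe, homApp_apply_coe] at h
  simpa [charOne, apply_ite (homCoeff K f q * ·)] using h

lemma exists_homCoeff_ne_zero {f : charMod K A hA ⟶ charMod K B hB} (hf : f ≠ 0) :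
    ∃ p, homCoeff K f p ≠ 0 := by
  by_contra! h
  refine hf (NatTrans.ext (funext fun p => ModuleCat.hom_ext (LinearMap.ext fun x => ?_)))
  exact Subtype.ext ((homApp_apply_coe K f x).trans (by rw [h p, zero_mul]; rfl))

theorem isValid_of_hom_ne_zero (hconn : PosetConnected (A ∩ B))
    {f : charMod K A hA ⟶ charMod K B hB} (hf : f ≠ 0) : IsValid A B (A ∩ B) := by
  obtain ⟨p₀, hp₀⟩ := exists_homCoeff_ne_zero K hf
  have hcoeff : ∀ p ∈ A ∩ B, homCoeff K f p ≠ 0 := by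
    intro p hp
    rwa [hconn.apply_eq (c := homCoeff K f) (fun a ha b hb hab => ?_) hp
      (mem_inter_of_homCoeff_ne_zero K f hp₀)]
    simpa [hb.1, hb.2] using (homCoeff_naturality K f hab ha.1).symm
  intro p hp
  refine ⟨fun q hqA hqp => by_contra fun hqB => hcoeff p hp ?_,
    fun r hrB hpr => by_contra fun hrA => hcoeff p hp ?_⟩
  · simpa [hp.1, hp.2, homCoeff_eq_zero_of_not_mem K f hqB] using homCoeff_naturality K f hqp hqA
  · simpa [hrA, hrB] using (homCoeff_naturality K f hpr hp.1).symm

end HomCoeff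

noncomputable def canonicalApp (A B : Set P) (p : P) :
    ↥(charSub K A p) →ₗ[K] ↥(charSub K B p) :=
  if hp : p ∈ B then
    LinearMap.codRestrict _ (charSub K A p).subtype
      (fun _ => by rw [charSub_eq_top K hp]; trivial)
  else 0

lemma canonicalApp_apply_coe (A B : Set P) {p : P} (x : ↥(charSub K A p)) :
    (canonicalApp K A B p x : K) = if p ∈ B then (x : K) else 0 := by
  unfold canonicalApp
  split_ifs <;> rfl

/-- The morphism `C(A) ⟶ C(B)` which is the identity of `K` on `A ∩ B`; validity of `A ∩ B`
is exactly naturality. -/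
noncomputable def canonicalHom {A B : Set P} (hA : PosetConvex A) (hB : PosetConvex B)
    (hv : IsValid A B (A ∩ B)) : charMod K A hA ⟶ charMod K B hB where
  app p := ModuleCat.ofHom (canonicalApp K A B p)
  naturality {p q} h := by
    refine ModuleCat.hom_ext (LinearMap.ext fun (x : ↥(charSub K A p)) => Subtype.ext ?_)
    show (canonicalApp K A B q (charMap K A p q x) : K) = charMap K B p q (canonicalApp K A B p x)
    simp only [canonicalApp_apply_coe, charMap_apply_coe]
    by_cases hpA : p ∈ A
    · have hpq := leOfHom h
      split_ifs with hqB hqA hpB hpB <;> try rfl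
      · exact absurd ((hv q ⟨hqA, hqB⟩).1 p hpA hpq) hpB
      · exact absurd ((hv p ⟨hpA, hpB⟩).2 q hqB hpq) hqA
    · simp [coe_charSub_eq_zero K hpA x]

section Interleaving

variable (Φ : RFlow P) {ε : ℝ} (hε : 0 ≤ ε) {I J : Set P} (hI : PosetConvex I)
  (hJ : PosetConvex J)

lemma canonicalHom_app_comp_app (hIJ : I ∩ Φ.shiftSet I (2 * ε) ⊆ Φ.shiftSet J ε)
    (hv : IsValid I (Φ.shiftSet J ε) (I ∩ Φ.shiftSet J ε))
    (hv' : IsValid J (Φ.shiftSet I ε) (J ∩ Φ.shiftSet I ε)) (p : P) :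
    (canonicalHom K hI (Φ.posetConvex_shiftSet hJ ε) hv).app p ≫
        (canonicalHom K hJ (Φ.posetConvex_shiftSet hI ε) hv').app (Φ.Ω ε p) =
      (charMod K I hI).map (homOfLE (Φ.self_le_twice hε p)) := by
  refine ModuleCat.hom_ext (LinearMap.ext fun (x : ↥(charSub K I p)) => Subtype.ext ?_)
  -- `C(J)(ε)` and `C(J(ε))` agree definitionally, so both factors can be read at `p`.
  show (canonicalApp K (Φ.shiftSet J ε) (Φ.shiftSet (Φ.shiftSet I ε) ε) p
      (canonicalApp K I (Φ.shiftSet J ε) p x) : K) = charMap K I p (Φ.Ω ε (Φ.Ω ε p)) x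
  rw [canonicalApp_apply_coe, canonicalApp_apply_coe, charMap_apply_coe]
  simp only [RFlow.shiftSet, Set.mem_ofPred_eq]
  by_cases h2 : Φ.Ω ε (Φ.Ω ε p) ∈ I
  · by_cases hpI : p ∈ I
    · have hpJ : Φ.Ω ε p ∈ J :=
        hIJ ⟨hpI, show Φ.Ω (2 * ε) p ∈ I by rwa [Φ.Ω_two_mul]⟩
      simp [h2, hpJ]
    · simp [coe_charSub_eq_zero K hpI x]
  · simp [h2]

lemma charMod_map_self_le_twice_ne_zero {p : P} (hp : p ∈ I ∩ Φ.shiftSet I (2 * ε)) :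
    (charMod K I hI).map (homOfLE (Φ.self_le_twice hε p)) ≠ 0 :=
  charMod_map_ne_zero K hI hp.1 (by simpa [RFlow.shiftSet, Φ.Ω_two_mul] using hp.2) _

lemma nonempty_inter_shiftSet_of_not_isTrivialIv {t : ℝ} (ht : 0 ≤ t)
    (hsig : ¬ IsTrivialIv K Φ ht I hI) : (I ∩ Φ.shiftSet I t).Nonempty := by
  obtain ⟨p, hp⟩ := not_forall.mp hsig
  exact ⟨p, mem_of_charMod_map_ne_zero K hI hp⟩

variable {f : charMod K I hI ⟶ Pshift K Φ ε (charMod K J hJ)}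
  {g : charMod K J hJ ⟶ Pshift K Φ ε (charMod K I hI)}

lemma inter_shiftSet_subset_of_interleaving
    (hfg : ∀ p, f.app p ≫ g.app (Φ.Ω ε p) =
      (charMod K I hI).map (homOfLE (Φ.self_le_twice hε p))) :
    I ∩ Φ.shiftSet I (2 * ε) ⊆ Φ.shiftSet J ε := fun p hp => by
  by_contra hpJ
  refine charMod_map_self_le_twice_ne_zero K Φ hε hI hp ?_
  rw [← hfg p, (isZero_charMod_obj K hJ hpJ).eq_zero_of_tgt (f.app p)]
  exact Limits.zero_comp

lemma ne_zero_of_interleaving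
    (hfg : ∀ p, f.app p ≫ g.app (Φ.Ω ε p) =
      (charMod K I hI).map (homOfLE (Φ.self_le_twice hε p)))
    {h2ε : 0 ≤ 2 * ε} (hsig : ¬ IsTrivialIv K Φ h2ε I hI) : f ≠ 0 := by
  rintro rfl
  obtain ⟨p, hp⟩ := nonempty_inter_shiftSet_of_not_isTrivialIv K Φ hI _ hsig
  refine charMod_map_self_le_twice_ne_zero K Φ hε hI hp ?_
  rw [← hfg p, NatTrans.app_zero]
  exact Limits.zero_comp

end Interleaving

/-- geometric characterization of `ε`-interleavings between interval
modules on `2ε`-significant intervals lying in an intersection-closed, flow-closed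
family of intervals. -/
theorem interleaving_characterization (Φ : RFlow P)
    (F : Set (Set P)) (hFiv : ∀ S ∈ F, IsInterval S)
    (hFcap : ∀ S ∈ F, ∀ T ∈ F, S ∩ T ∈ F)
    (hFflow : ∀ S ∈ F, ∀ t : ℝ, Φ.Ω t '' S ∈ F)
    {ε : ℝ} (hε : 0 ≤ ε) (I J : Set P) (hIF : I ∈ F) (hJF : J ∈ F)
    (hIsig : ¬ IsTrivialIv K Φ (show (0:ℝ) ≤ 2 * ε by linarith) I (hFiv I hIF).1)
    (hJsig : ¬ IsTrivialIv K Φ (show (0:ℝ) ≤ 2 * ε by linarith) J (hFiv J hJF).1) :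
    Interleaved K Φ hε (charMod K I (hFiv I hIF).1) (charMod K J (hFiv J hJF).1) ↔
      ((∃ f : charMod K I (hFiv I hIF).1 ⟶
           charMod K (Φ.shiftSet J ε) (Φ.posetConvex_shiftSet (hFiv J hJF).1 ε), f ≠ 0) ∧
       (∃ g : charMod K J (hFiv J hJF).1 ⟶
           charMod K (Φ.shiftSet I ε) (Φ.posetConvex_shiftSet (hFiv I hIF).1 ε), g ≠ 0) ∧
       ((I ∩ Φ.shiftSet I (2 * ε)).Nonempty ∧
         I ∩ Φ.shiftSet I (2 * ε) ⊆ Φ.shiftSet J ε) ∧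
       ((J ∩ Φ.shiftSet J (2 * ε)).Nonempty ∧
         J ∩ Φ.shiftSet J (2 * ε) ⊆ Φ.shiftSet I ε)) := by
  have hI := (hFiv I hIF).1
  have hJ := (hFiv J hJF).1
  constructor
  · rintro ⟨f, g, hfg, hgf⟩
    exact ⟨⟨f, ne_zero_of_interleaving K Φ hε hI hJ hfg hIsig⟩,
      ⟨g, ne_zero_of_interleaving K Φ hε hJ hI hgf hJsig⟩,
      ⟨nonempty_inter_shiftSet_of_not_isTrivialIv K Φ hI _ hIsig,
        inter_shiftSet_subset_of_interleaving K Φ hε hI hJ hfg⟩,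
      ⟨nonempty_inter_shiftSet_of_not_isTrivialIv K Φ hJ _ hJsig,
        inter_shiftSet_subset_of_interleaving K Φ hε hJ hI hgf⟩⟩
  · rintro ⟨⟨f₀, hf₀⟩, ⟨g₀, hg₀⟩, ⟨-, hIJ⟩, ⟨-, hJI⟩⟩
    have shift_mem : ∀ S ∈ F, Φ.shiftSet S ε ∈ F := fun S hS =>
      Φ.shiftSet_eq_image S ε ▸ hFflow S hS (-ε)
    have hv := isValid_of_hom_ne_zero K (hFiv _ (hFcap I hIF _ (shift_mem J hJF))).2 hf₀
    have hv' := isValid_of_hom_ne_zero K (hFiv _ (hFcap J hJF _ (shift_mem I hIF))).2 hg₀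
    exact ⟨canonicalHom K hI _ hv, canonicalHom K hJ _ hv',
      canonicalHom_app_comp_app K Φ hε hI hJ hIJ hv hv',
      canonicalHom_app_comp_app K Φ hε hJ hI hJI hv' hv⟩
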